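/- arXiv:1401.5097 — 5 statements merged into one kernel-verified Lean document; each statement's English description precedes it below -/
import Mathlib

section
/- If R is a simulation between transition relations ⟶ and ⟶', the inverse of R is a presimulation from ⟶' to ⟶, and ⟶' is deterministic at every state b related by R to some a, then the inverse of R is a simulation from ⟶' to ⟶. -/
def Simulation {A B : Type*} (step : A → A → Prop) (step' : B → B → Prop)
    (R : A → B → Prop) : Prop :=
  ∀ a a' b, step a a' → R a b → ∃ b', step' b b' ∧ R a' b'

def Presimulation {A B : Type*} (step : A → A → Prop) (step' : B → B → Prop)
    (R : A → B → Prop) : Prop :=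
  ∀ a a' b, step a a' → R a b → ∃ b', step' b b'

def DeterministicAt {A : Type*} (step : A → A → Prop) (a : A) : Prop :=
  ∀ a₁ a₂, step a a₁ → step a a₂ → a₁ = a₂

theorem presimulation_to_simulation {A B : Type*}
    (step : A → A → Prop) (step' : B → B → Prop) (R : A → B → Prop)
    (hsim : Simulation step step' R)
    (hpre : Presimulation step' step (fun b a => R a b))
    (hdet : ∀ a b, R a b → DeterministicAt step' b) :
    Simulation step' step (fun b a => R a b) := by
  intro b b' a hb hR
  obtain ⟨a', ha⟩ := hpre b b' a hb hR
  obtain ⟨b'', hb'', hR'⟩ := hsim a a' b ha hR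
  obtain rfl : b' = b'' := hdet a b hR b' b'' hb hb''
  exact ⟨a', ha, hR'⟩
end

section
/- If R is a simulation between ⟶ and ⟶', the inverse of R is a presimulation, and ⟶' is deterministic at every state related to some source state, then R is a bisimulation (i.e., both R and R⁻¹ are simulations). -/
def Bisimulation {A B : Type*} (step : A → A → Prop) (step' : B → B → Prop)
    (R : A → B → Prop) : Prop :=
  Simulation step step' R ∧ Simulation step' step (fun b a => R a b)

theorem Simulation.flip_of_presimulation {A B : Type*}
    {step : A → A → Prop} {step' : B → B → Prop} {R : A → B → Prop}
    (hsim : Simulation step step' R)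
    (hpre : Presimulation step' step (fun b a => R a b))
    (hdet : ∀ a b, R a b → DeterministicAt step' b) :
    Simulation step' step (fun b a => R a b) := by
  intro b b' a hb hR
  obtain ⟨a', ha'⟩ := hpre b b' a hb hR
  -- `R` matches the step `a ⟶ a'` by some step from `b`, which determinism identifies with `b ⟶' b'`.
  obtain ⟨b'', hb'', hR'⟩ := hsim a a' b ha' hR
  obtain rfl : b' = b'' := hdet a b hR b' b'' hb hb''
  exact ⟨a', ha', hR'⟩

theorem simulation_to_bisimulation {A B : Type*}
    (step : A → A → Prop) (step' : B → B → Prop) (R : A → B → Prop)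
    (hsim : Simulation step step' R)
    (hpre : Presimulation step' step (fun b a => R a b))
    (hdet : ∀ a b, R a b → DeterministicAt step' b) :
    Bisimulation step step' R :=
  ⟨hsim, hsim.flip_of_presimulation hpre hdet⟩
end

section
/- Any synchronous network step can be simulated by one or more asynchronous network steps between states with empty message lists: if nodes ⟶Sync nodes', then (nodes, []) ⟶Async⁺ (nodes', []). -/
inductive Tagged (M : Type) : Type where
  | silent : Tagged M
  | send : M → Tagged M
  | receive : M → Tagged M

def detag {M : Type} : Tagged M → List M × List M
  | .silent => ([], [])
  | .send x => ([], [x])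
  | .receive x => ([x], [])

def update {Node Machine : Type} [DecidableEq Node]
    (f : Node → Machine) (i : Node) (x : Machine) : Node → Machine :=
  fun j => if j = i then x else f j

/-- Synchronous network transitions: either a silent local step,
or a rendezvous of a send and a matching receive. -/
inductive SyncStep {Node Machine Msg : Type} [DecidableEq Node]
    (step : Node → Machine → Tagged Msg → Machine → Prop) :
    (Node → Machine) → (Node → Machine) → Prop where
  | silentStep {nodes : Node → Machine} {i : Node} {m' : Machine} :
      step i (nodes i) .silent m' →
      SyncStep step nodes (update nodes i m')
  | commStep {nodes : Node → Machine} {s r : Node} {msg : Msg}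
      {sender' receiver' : Machine} :
      step s (nodes s) (.send msg) sender' →
      step r (update nodes s sender' r) (.receive msg) receiver' →
      SyncStep step nodes (update (update nodes s sender') r receiver')

/-- Asynchronous network transitions: a node takes a local step whose
received messages are taken from, and sent messages added to, the message soup. -/
inductive AsyncStep {Node Machine Msg : Type} [DecidableEq Node]
    (step : Node → Machine → Tagged Msg → Machine → Prop) :
    (Node → Machine) × List Msg → (Node → Machine) × List Msg → Prop where
  | step {nodes : Node → Machine} (msgsl msgsr : List Msg)
      {t : Tagged Msg} {m' : Machine} {i : Node} :
      step i (nodes i) t m' →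
      AsyncStep step (nodes, msgsl ++ (detag t).1 ++ msgsr)
                     (update nodes i m', msgsl ++ (detag t).2 ++ msgsr)

namespace AsyncStep

variable {Node Machine Msg : Type} [DecidableEq Node]
  {step : Node → Machine → Tagged Msg → Machine → Prop}
  {nodes : Node → Machine} {i : Node} {m' : Machine} {msgs : List Msg}

theorem of_silent (h : step i (nodes i) .silent m') :
    AsyncStep step (nodes, msgs) (update nodes i m', msgs) := by
  simpa [detag] using AsyncStep.step [] msgs h

theorem of_send {msg : Msg} (h : step i (nodes i) (.send msg) m') :
    AsyncStep step (nodes, msgs) (update nodes i m', msg :: msgs) := by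
  simpa [detag] using AsyncStep.step [] msgs h

theorem of_receive {msg : Msg} (h : step i (nodes i) (.receive msg) m') :
    AsyncStep step (nodes, msg :: msgs) (update nodes i m', msgs) := by
  simpa [detag] using AsyncStep.step [] msgs h

end AsyncStep

theorem syncStep_to_asyncStep_plus {Node Machine Msg : Type} [DecidableEq Node]
    (step : Node → Machine → Tagged Msg → Machine → Prop)
    {nodes nodes' : Node → Machine}
    (h : SyncStep step nodes nodes') :
    Relation.TransGen (AsyncStep step) (nodes, ([] : List Msg)) (nodes', []) := by
  cases h with
  | silentStep hs => exact .single (.of_silent hs)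
  | commStep hs hr => exact .head (.of_send hs) (.single (.of_receive hr))
end

section
/- For asynchronous networks over the DCESH local transition relation: if all nodes in nodes except one node i are inactive, and (nodes, []) ⟶Async⁺ (nodes', []), then nodes ⟶Sync⁺ nodes' (the transition can also be performed purely synchronously). -/
/-- A machine is inactive if its thread component is `none`. -/
def Inactive {Thread H : Type} (m : Option Thread × H) : Prop := m.1 = none

/-!
At every reachable configuration either the soup is empty and at most one thread runs, or the
soup holds a single message and every thread is stopped: the only thread that can send is the
running one, and sending stops it. In the second case nothing but the receipt of that message can
happen next, so each asynchronous send is immediately followed by its receive, and the pair is one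
synchronous rendezvous.
-/

section Update

variable {Node Machine : Type} [DecidableEq Node]

@[simp]
lemma update_apply_self (f : Node → Machine) (i : Node) (x : Machine) : update f i x i = x :=
  if_pos rfl

@[simp]
lemma update_apply_of_ne (f : Node → Machine) {i j : Node} (x : Machine) (h : j ≠ i) :
    update f i x j = f j :=
  if_neg h

end Update

lemma AsyncStep.exists_eq {Node Machine Msg : Type} [DecidableEq Node]
    {step : Node → Machine → Tagged Msg → Machine → Prop}
    {ns ns' : Node → Machine} {soup soup' : List Msg}
    (h : AsyncStep step (ns, soup) (ns', soup')) :
    ∃ (i : Node) (t : Tagged Msg) (m' : Machine) (l r : List Msg),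
      step i (ns i) t m' ∧ soup = l ++ (detag t).1 ++ r ∧
      ns' = update ns i m' ∧ soup' = l ++ (detag t).2 ++ r := by
  cases h with
  | step l r hstep => exact ⟨_, _, _, l, r, hstep, rfl, rfl, rfl⟩

lemma List.eq_nil_and_eq_nil_of_singleton_eq_append {α : Type} {a b : α} {l r : List α}
    (h : [a] = l ++ [b] ++ r) : l = [] ∧ r = [] ∧ b = a := by
  rcases l with _ | ⟨_, _⟩ <;> rcases r with _ | ⟨_, _⟩ <;> simp_all

section Network

variable {Node Thread H Msg : Type}

def OnlyActive (ns : Node → Option Thread × H) (j : Node) : Prop :=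
  ∀ i, i ≠ j → Inactive (ns i)

def AllInactive (ns : Node → Option Thread × H) : Prop :=
  ∀ i, Inactive (ns i)

lemma OnlyActive.eq_of_not_inactive {ns : Node → Option Thread × H} {i j : Node}
    (h : OnlyActive ns j) (hi : ¬ Inactive (ns i)) : i = j :=
  by_contra fun hij => hi (h i hij)

variable [DecidableEq Node]

lemma OnlyActive.update {ns : Node → Option Thread × H} {j : Node} (h : OnlyActive ns j)
    (m : Option Thread × H) : OnlyActive (_root_.update ns j m) j := fun i hi => by
  simpa [hi] using h i hi

lemma OnlyActive.allInactive_update {ns : Node → Option Thread × H} {j : Node}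
    (h : OnlyActive ns j) {m : Option Thread × H} (hm : Inactive m) :
    AllInactive (_root_.update ns j m) := fun i => by
  by_cases hi : i = j
  · simpa [hi] using hm
  · simpa [hi] using h i hi

lemma AllInactive.onlyActive_update {ns : Node → Option Thread × H} (h : AllInactive ns)
    (j : Node) (m : Option Thread × H) : OnlyActive (_root_.update ns j m) j := fun i hi => by
  simpa [hi] using h i

/-- The asynchronous configuration `c` stands for the synchronous state `ns`; by `Tracks.asyncStep`
this relation is a simulation. -/
inductive Tracks (step : Node → (Option Thread × H) → Tagged Msg → (Option Thread × H) → Prop) :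
    (Node → Option Thread × H) → (Node → Option Thread × H) × List Msg → Prop where
  | quiet {ns : Node → Option Thread × H} {j : Node} :
      OnlyActive ns j → Tracks step ns (ns, [])
  | inFlight {ns : Node → Option Thread × H} {s : Node} {msg : Msg}
      {sender' : Option Thread × H} :
      step s (ns s) (.send msg) sender' → AllInactive (update ns s sender') →
      Tracks step ns (update ns s sender', [msg])

variable {step : Node → (Option Thread × H) → Tagged Msg → (Option Thread × H) → Prop}

lemma Tracks.eq_of_nil {ns ns' : Node → Option Thread × H} (h : Tracks step ns (ns', [])) :
    ns' = ns := by
  cases h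
  rfl

lemma Tracks.asyncStep
    (hNoSilent : ∀ (i : Node) (m m' : Option Thread × H), Inactive m → ¬ step i m .silent m')
    (hNoSend : ∀ (i : Node) (m : Option Thread × H) (msg : Msg) (m' : Option Thread × H),
      Inactive m → ¬ step i m (.send msg) m')
    (hSendStops : ∀ (i : Node) (m : Option Thread × H) (msg : Msg) (m' : Option Thread × H),
      step i m (.send msg) m' → Inactive m')
    {ns : Node → Option Thread × H} {c c' : (Node → Option Thread × H) × List Msg}
    (hc : Tracks step ns c) (h : AsyncStep step c c') :
    (∃ ns', SyncStep step ns ns' ∧ Tracks step ns' c') ∨ (c'.2 ≠ [] ∧ Tracks step ns c') := by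
  obtain ⟨ns₁, soup⟩ := c
  obtain ⟨ns₁', soup'⟩ := c'
  obtain ⟨i, t, m', l, r, hst, hsoup, rfl, rfl⟩ := h.exists_eq
  cases hc with
  | @quiet j hj =>
    cases t with
    | silent =>
      obtain rfl := hj.eq_of_not_inactive fun hin => hNoSilent _ _ _ hin hst
      obtain ⟨rfl, rfl⟩ : l = [] ∧ r = [] := by simpa [detag] using hsoup
      exact .inl ⟨_, .silentStep hst, .quiet (hj.update m')⟩
    | send msg =>
      obtain rfl := hj.eq_of_not_inactive fun hin => hNoSend _ _ _ _ hin hst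
      obtain ⟨rfl, rfl⟩ : l = [] ∧ r = [] := by simpa [detag] using hsoup
      have hsent := hj.allInactive_update (hSendStops _ _ _ _ hst)
      exact .inr ⟨by simp [detag], .inFlight hst hsent⟩
    | receive => simp [detag] at hsoup
  | @inFlight s msg sender' hsend hall =>
    cases t with
    | silent => exact absurd hst (hNoSilent _ _ _ (hall i))
    | send => exact absurd hst (hNoSend _ _ _ _ (hall i))
    | receive msg' =>
      obtain ⟨rfl, rfl, rfl⟩ := List.eq_nil_and_eq_nil_of_singleton_eq_append hsoup
      exact .inl ⟨_, .commStep hsend hst, .quiet (hall.onlyActive_update i m')⟩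

lemma Tracks.transGen_syncStep
    (hNoSilent : ∀ (i : Node) (m m' : Option Thread × H), Inactive m → ¬ step i m .silent m')
    (hNoSend : ∀ (i : Node) (m : Option Thread × H) (msg : Msg) (m' : Option Thread × H),
      Inactive m → ¬ step i m (.send msg) m')
    (hSendStops : ∀ (i : Node) (m : Option Thread × H) (msg : Msg) (m' : Option Thread × H),
      step i m (.send msg) m' → Inactive m')
    {ns nodes' : Node → Option Thread × H} {c : (Node → Option Thread × H) × List Msg}
    (hc : Tracks step ns c) (h : Relation.TransGen (AsyncStep step) c (nodes', [])) :
    Relation.TransGen (SyncStep step) ns nodes' := by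
  induction h using Relation.TransGen.head_induction_on generalizing ns with
  | single hstep =>
    rcases hc.asyncStep hNoSilent hNoSend hSendStops hstep with
      ⟨ns', hsync, hns'⟩ | ⟨hne, _⟩
    · exact .single (hns'.eq_of_nil ▸ hsync)
    · exact (hne rfl).elim
  | head hstep _ ih =>
    rcases hc.asyncStep hNoSilent hNoSend hSendStops hstep with
      ⟨ns', hsync, hns'⟩ | ⟨_, hns⟩
    · exact .head hsync (ih hns')
    · exact ih hns

end Network

theorem asyncPlus_to_syncPlus_general {Node Thread H Msg : Type} [DecidableEq Node]
    (step : Node → (Option Thread × H) → Tagged Msg → (Option Thread × H) → Prop)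
    -- (2) a node with no running thread cannot take a silent or send step
    (hNoSilent : ∀ (i : Node) (m m' : Option Thread × H),
      Inactive m → ¬ step i m .silent m')
    (hNoSend : ∀ (i : Node) (m : Option Thread × H) (msg : Msg) (m' : Option Thread × H),
      Inactive m → ¬ step i m (.send msg) m')
    -- (3) after a send step the sender's thread is stopped; a receive step can only be
    -- taken from an inactive state and results in an active state
    (hSendStops : ∀ (i : Node) (m : Option Thread × H) (msg : Msg) (m' : Option Thread × H),
      step i m (.send msg) m' → Inactive m')
    {nodes nodes' : Node → Option Thread × H} (i : Node)
    (hia : ∀ i', i' ≠ i → Inactive (nodes i'))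
    (h : Relation.TransGen (AsyncStep step) (nodes, ([] : List Msg)) (nodes', [])) :
    Relation.TransGen (SyncStep step) nodes nodes' :=
  (Tracks.quiet hia).transGen_syncStep hNoSilent hNoSend hSendStops h

theorem asyncPlus_to_syncPlus {Node Thread H Msg : Type} [DecidableEq Node]
    (step : Node → (Option Thread × H) → Tagged Msg → (Option Thread × H) → Prop)
    -- (1) point-to-point: any message can be received by at most one node
    (hpt : ∀ (ms : Node → Option Thread × H) (msg : Msg) (i₁ i₂ : Node)
      (m₁ m₂ : Option Thread × H),
      step i₁ (ms i₁) (.receive msg) m₁ → step i₂ (ms i₂) (.receive msg) m₂ → i₁ = i₂)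
    -- (2) a node with no running thread cannot take a silent or send step
    (hNoSilent : ∀ (i : Node) (m m' : Option Thread × H),
      Inactive m → ¬ step i m .silent m')
    (hNoSend : ∀ (i : Node) (m : Option Thread × H) (msg : Msg) (m' : Option Thread × H),
      Inactive m → ¬ step i m (.send msg) m')
    -- (3) after a send step the sender's thread is stopped; a receive step can only be
    -- taken from an inactive state and results in an active state
    (hSendStops : ∀ (i : Node) (m : Option Thread × H) (msg : Msg) (m' : Option Thread × H),
      step i m (.send msg) m' → Inactive m')
    (hReceive : ∀ (i : Node) (m : Option Thread × H) (msg : Msg) (m' : Option Thread × H),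
      step i m (.receive msg) m' → Inactive m ∧ ¬ Inactive m')
    {nodes nodes' : Node → Option Thread × H} (i : Node)
    (hia : ∀ i', i' ≠ i → Inactive (nodes i'))
    (h : Relation.TransGen (AsyncStep step) (nodes, ([] : List Msg)) (nodes', [])) :
    Relation.TransGen (SyncStep step) nodes nodes' :=
  asyncPlus_to_syncPlus_general step hNoSilent hNoSend hSendStops i hia h
end

section
/- If all nodes in a synchronous network except one node i are inactive, then the synchronous network transition relation is deterministic at that network: any two successor networks are equal. -/
/-!
Only node `i` is active, so every silent or send step of the network is taken by `i`. As `i`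
cannot both send and step silently, two transitions are either both silent steps of `i`, equal by
determinism of silent steps, or both sends of `i` followed by a receive: the send fixes the
message and the sender's new state, point-to-point delivery fixes the receiver, and determinism
of receives fixes its new state.
-/

section SoleActor

variable {Node Machine Msg : Type} [DecidableEq Node]
  {step : Node → Machine → Tagged Msg → Machine → Prop} {nodes : Node → Machine} {i : Node}

theorem SyncStep.eq_update_of_silent
    (hSilentDet : ∀ m₁ m₂, step i (nodes i) .silent m₁ → step i (nodes i) .silent m₂ → m₁ = m₂)
    (hNoSendSilent : ∀ msg m₁ m₂,
      step i (nodes i) (.send msg) m₁ → step i (nodes i) .silent m₂ → False)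
    (hSilentSole : ∀ j m', step j (nodes j) .silent m' → j = i)
    (hSendSole : ∀ j msg m', step j (nodes j) (.send msg) m' → j = i)
    {m' : Machine} (hs : step i (nodes i) .silent m')
    {nodes₂ : Node → Machine} (h : SyncStep step nodes nodes₂) :
    nodes₂ = update nodes i m' := by
  cases h with
  | silentStep hs₂ =>
    obtain rfl := hSilentSole _ _ hs₂
    rw [hSilentDet _ _ hs hs₂]
  | commStep hsend _ =>
    obtain rfl := hSendSole _ _ _ hsend
    exact (hNoSendSilent _ _ _ hsend hs).elim

theorem SyncStep.eq_update_of_comm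
    (hSendDet : ∀ msg₁ msg₂ m₁ m₂, step i (nodes i) (.send msg₁) m₁ →
      step i (nodes i) (.send msg₂) m₂ → msg₁ = msg₂ ∧ m₁ = m₂)
    (hReceiveDet : ∀ j m msg m₁ m₂,
      step j m (.receive msg) m₁ → step j m (.receive msg) m₂ → m₁ = m₂)
    (hNoSendSilent : ∀ msg m₁ m₂,
      step i (nodes i) (.send msg) m₁ → step i (nodes i) .silent m₂ → False)
    (hpt : ∀ (ms : Node → Machine) msg j₁ j₂ m₁ m₂,
      step j₁ (ms j₁) (.receive msg) m₁ → step j₂ (ms j₂) (.receive msg) m₂ → j₁ = j₂)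
    (hSilentSole : ∀ j m', step j (nodes j) .silent m' → j = i)
    (hSendSole : ∀ j msg m', step j (nodes j) (.send msg) m' → j = i)
    {r : Node} {msg : Msg} {sender' receiver' : Machine}
    (hsend : step i (nodes i) (.send msg) sender')
    (hrecv : step r (update nodes i sender' r) (.receive msg) receiver')
    {nodes₂ : Node → Machine} (h : SyncStep step nodes nodes₂) :
    nodes₂ = update (update nodes i sender') r receiver' := by
  cases h with
  | silentStep hs =>
    obtain rfl := hSilentSole _ _ hs
    exact (hNoSendSilent _ _ _ hsend hs).elim
  | commStep hsend₂ hrecv₂ =>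
    obtain rfl := hSendSole _ _ _ hsend₂
    obtain ⟨rfl, rfl⟩ := hSendDet _ _ _ _ hsend hsend₂
    obtain rfl := hpt _ _ _ _ _ _ hrecv hrecv₂
    rw [hReceiveDet _ _ _ _ _ hrecv hrecv₂]

end SoleActor

theorem determinism_Sync_general {Node Thread H Msg : Type} [DecidableEq Node]
    (step : Node → (Option Thread × H) → Tagged Msg → (Option Thread × H) → Prop)
    -- (a) the silent transition relation at each node is deterministic
    (hSilentDet : ∀ (i : Node) (m m₁ m₂ : Option Thread × H),
      step i m .silent m₁ → step i m .silent m₂ → m₁ = m₂)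
    -- (b) the combined send relation (message and new machine) is deterministic
    (hSendDet : ∀ (i : Node) (m : Option Thread × H) (msg₁ msg₂ : Msg)
      (m₁ m₂ : Option Thread × H),
      step i m (.send msg₁) m₁ → step i m (.send msg₂) m₂ → msg₁ = msg₂ ∧ m₁ = m₂)
    -- (c) for each fixed message, the receive relation is deterministic
    (hReceiveDet : ∀ (i : Node) (m : Option Thread × H) (msg : Msg)
      (m₁ m₂ : Option Thread × H),
      step i m (.receive msg) m₁ → step i m (.receive msg) m₂ → m₁ = m₂)
    -- (d) no machine can take both a send and a silent step
    (hNoSendSilent : ∀ (i : Node) (m : Option Thread × H) (msg : Msg)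
      (m₁ m₂ : Option Thread × H),
      step i m (.send msg) m₁ → step i m .silent m₂ → False)
    -- (e) sends and silents only from active machines, receives only from inactive ones
    (hSendActive : ∀ (i : Node) (m : Option Thread × H) (msg : Msg)
      (m' : Option Thread × H), step i m (.send msg) m' → ¬ Inactive m)
    (hSilentActive : ∀ (i : Node) (m m' : Option Thread × H),
      step i m .silent m' → ¬ Inactive m)
    -- (f) point-to-point: if two nodes can receive the same message they are equal
    (hpt : ∀ (ms : Node → Option Thread × H) (msg : Msg) (i₁ i₂ : Node)
      (m₁ m₂ : Option Thread × H),
      step i₁ (ms i₁) (.receive msg) m₁ → step i₂ (ms i₂) (.receive msg) m₂ → i₁ = i₂)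
    (nodes : Node → Option Thread × H) (i : Node)
    (hia : ∀ i', i' ≠ i → Inactive (nodes i'))
    {nodes₁ nodes₂ : Node → Option Thread × H}
    (h₁ : SyncStep step nodes nodes₁) (h₂ : SyncStep step nodes nodes₂) :
    nodes₁ = nodes₂ := by
  have hSole : ∀ j, ¬ Inactive (nodes j) → j = i := fun j => not_imp_comm.1 (hia j)
  have hSilentSole : ∀ j m', step j (nodes j) .silent m' → j = i :=
    fun j _ hs => hSole j (hSilentActive j _ _ hs)
  have hSendSole : ∀ j msg m', step j (nodes j) (.send msg) m' → j = i :=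
    fun j _ _ hsend => hSole j (hSendActive j _ _ _ hsend)
  cases h₁ with
  | silentStep hs =>
    obtain rfl := hSilentSole _ _ hs
    exact (SyncStep.eq_update_of_silent (hSilentDet _ _) (hNoSendSilent _ _)
      hSilentSole hSendSole hs h₂).symm
  | commStep hsend hrecv =>
    obtain rfl := hSendSole _ _ _ hsend
    exact (SyncStep.eq_update_of_comm (hSendDet _ _) hReceiveDet (hNoSendSilent _ _) hpt
      hSilentSole hSendSole hsend hrecv h₂).symm

theorem determinism_Sync {Node Thread H Msg : Type} [DecidableEq Node]
    (step : Node → (Option Thread × H) → Tagged Msg → (Option Thread × H) → Prop)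
    -- (a) the silent transition relation at each node is deterministic
    (hSilentDet : ∀ (i : Node) (m m₁ m₂ : Option Thread × H),
      step i m .silent m₁ → step i m .silent m₂ → m₁ = m₂)
    -- (b) the combined send relation (message and new machine) is deterministic
    (hSendDet : ∀ (i : Node) (m : Option Thread × H) (msg₁ msg₂ : Msg)
      (m₁ m₂ : Option Thread × H),
      step i m (.send msg₁) m₁ → step i m (.send msg₂) m₂ → msg₁ = msg₂ ∧ m₁ = m₂)
    -- (c) for each fixed message, the receive relation is deterministic
    (hReceiveDet : ∀ (i : Node) (m : Option Thread × H) (msg : Msg)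
      (m₁ m₂ : Option Thread × H),
      step i m (.receive msg) m₁ → step i m (.receive msg) m₂ → m₁ = m₂)
    -- (d) no machine can take both a send and a silent step
    (hNoSendSilent : ∀ (i : Node) (m : Option Thread × H) (msg : Msg)
      (m₁ m₂ : Option Thread × H),
      step i m (.send msg) m₁ → step i m .silent m₂ → False)
    -- (e) sends and silents only from active machines, receives only from inactive ones
    (hSendActive : ∀ (i : Node) (m : Option Thread × H) (msg : Msg)
      (m' : Option Thread × H), step i m (.send msg) m' → ¬ Inactive m)
    (hSilentActive : ∀ (i : Node) (m m' : Option Thread × H),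
      step i m .silent m' → ¬ Inactive m)
    (hReceiveInactive : ∀ (i : Node) (m : Option Thread × H) (msg : Msg)
      (m' : Option Thread × H), step i m (.receive msg) m' → Inactive m)
    -- (f) point-to-point: if two nodes can receive the same message they are equal
    (hpt : ∀ (ms : Node → Option Thread × H) (msg : Msg) (i₁ i₂ : Node)
      (m₁ m₂ : Option Thread × H),
      step i₁ (ms i₁) (.receive msg) m₁ → step i₂ (ms i₂) (.receive msg) m₂ → i₁ = i₂)
    (nodes : Node → Option Thread × H) (i : Node)
    (hia : ∀ i', i' ≠ i → Inactive (nodes i'))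
    {nodes₁ nodes₂ : Node → Option Thread × H}
    (h₁ : SyncStep step nodes nodes₁) (h₂ : SyncStep step nodes nodes₂) :
    nodes₁ = nodes₂ :=
  determinism_Sync_general step hSilentDet hSendDet hReceiveDet hNoSendSilent hSendActive
    hSilentActive hpt nodes i hia h₁ h₂
end
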